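/- Let Θ_1 : ℤ[SL(2,ℤ)] → ℤ[ℙ¹(ℚ)] be the ℤ-linear map sending a group element γ to (γ·∞) − (γ·0), where SL(2,ℤ) acts on ℙ¹(ℚ) by Möbius transformations, ∞ = (1:0) and 0 = (0:1). Then: (i) the image of Θ_1 is exactly ℤ[ℙ¹(ℚ)]⁰, the kernel of the augmentation map ℤ[ℙ¹(ℚ)] → ℤ, Σ λ_p (p) ↦ Σ λ_p; (ii) the kernel of Θ_1 is the left ideal ℤ[SL(2,ℤ)](1+S) + ℤ[SL(2,ℤ)](1+U+U²) of the group ring ℤ[SL(2,ℤ)], where S = (0 −1; 1 0) and U = (0 1; −1 1). Equivalently, the sequence 0 → ℤ[SL(2,ℤ)](1+S) + ℤ[SL(2,ℤ)](1+U+U²) → ℤ[SL(2,ℤ)] → ℤ[ℙ¹(ℚ)]⁰ → 0 is exact. -/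

import Mathlib

noncomputable section

/-- `SL(2,ℤ)`. -/
abbrev SL2Z := Matrix.SpecialLinearGroup (Fin 2) ℤ

/-- The projective line `ℙ¹(ℚ)`. -/
abbrev P1Q := Projectivization ℚ (Fin 2 → ℚ)

/-- The Möbius action of `SL(2,ℤ)` on `ℙ¹(ℚ)`:
`(a b; c d)·(p:q) = (ap+bq : cp+dq)`. -/
def mobius (γ : SL2Z) (x : P1Q) : P1Q :=
  Projectivization.map
    ((Matrix.SpecialLinearGroup.toLin'
        (Matrix.SpecialLinearGroup.map (Int.castRingHom ℚ) γ)).toLinearMap)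
    (LinearEquiv.injective _) x

/-- The point `∞ = (1:0)` of `ℙ¹(ℚ)`. -/
def inftyP : P1Q :=
  Projectivization.mk ℚ ![1, 0] (by intro h; simpa using congrFun h 0)

/-- The point `0 = (0:1)` of `ℙ¹(ℚ)`. -/
def zeroP : P1Q :=
  Projectivization.mk ℚ ![0, 1] (by intro h; simpa using congrFun h 1)

/-- The `ℤ`-linear map `Θ₁ : ℤ[SL(2,ℤ)] → ℤ[ℙ¹(ℚ)]` sending a group element `γ` to
`(γ·∞) − (γ·0)`. -/
def Theta1 (x : MonoidAlgebra ℤ SL2Z) : P1Q →₀ ℤ :=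
  Finsupp.sum x.coeff fun γ c =>
    c • (Finsupp.single (mobius γ inftyP) 1 - Finsupp.single (mobius γ zeroP) 1)

/-- `S = (0 −1; 1 0)` as an element of `SL(2,ℤ)`. -/
def Sel : SL2Z := ⟨!![0, -1; 1, 0], by norm_num [Matrix.det_fin_two_of]⟩

/-- `U = (0 1; −1 1)` as an element of `SL(2,ℤ)`. -/
def Uel : SL2Z := ⟨!![0, 1; -1, 1], by norm_num [Matrix.det_fin_two_of]⟩


/-!
`Θ₁ γ = (γ∞) - (γ0)` is the boundary of the Farey edge joining the two columns of `γ`; the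
relation `1 + S` reverses the edge and `1 + U + U²` is the boundary of a Farey triangle.

Image: the Euclidean algorithm on `p` produces matrices whose `Θ₁`-images telescope to
`(p) - (∞)`, so every divisor of degree zero is hit.

Kernel: it suffices that every `γ` is congruent, modulo the left ideal, to the difference of
the Euclidean paths of `γ∞` and `γ0`; then every `x` is congruent to the lift of `Θ₁ x`. This is
proved by induction on `|c| + |d|`. Using `1 + S` we may assume `|d| ≤ |c|`; then `γ = ± g Tⁿ`
with `g` the Euclidean step at `γ∞` and `n ∈ {-1, 0, 1}`, and for `n = ±1` the relation
`1 + U + U²` links `γ` to `g` through a matrix with smaller `|c| + |d|`.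
-/

open Projectivization Matrix ModularGroup

lemma det_fin_two_eq_one (γ : SL2Z) : γ 0 0 * γ 1 1 - γ 0 1 * γ 1 0 = 1 := by
  rw [← Matrix.det_fin_two]
  exact γ.det_coe

lemma coe_Sel : (Sel : Matrix (Fin 2) (Fin 2) ℤ) = !![0, -1; 1, 0] := rfl

lemma coe_Uel : (Uel : Matrix (Fin 2) (Fin 2) ℤ) = !![0, 1; -1, 1] := rfl

lemma SL2Z_mul_apply (γ δ : SL2Z) (i j : Fin 2) :
    (γ * δ) i j = γ i 0 * δ 0 j + γ i 1 * δ 1 j := by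
  simp [Matrix.mul_apply, Fin.sum_univ_two]

lemma Sel_mul_Uel : Sel * Uel = T⁻¹ := by
  ext i j; fin_cases i <;> fin_cases j <;> rfl

lemma mobius_eq_smul (γ : SL2Z) (x : P1Q) :
    mobius γ x = SpecialLinearGroup.map (Int.castRingHom ℚ) γ • x := rfl

lemma mobius_mul (γ δ : SL2Z) (x : P1Q) : mobius (γ * δ) x = mobius γ (mobius δ x) := by
  simp only [mobius_eq_smul, map_mul, mul_smul]

lemma mobius_one (x : P1Q) : mobius 1 x = x := by
  simp only [mobius_eq_smul, map_one, one_smul]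

lemma mobius_mk_eq_mk_iff (γ : SL2Z) {v w : Fin 2 → ℚ} (hv : v ≠ 0) (hw : w ≠ 0) :
    mobius γ (mk ℚ v hv) = mk ℚ w hw ↔
      ∃ t : ℚ, t • w = ![γ 0 0 * v 0 + γ 0 1 * v 1, γ 1 0 * v 0 + γ 1 1 * v 1] := by
  rw [mobius_eq_smul, smul_mk, mk_eq_mk_iff', Matrix.SpecialLinearGroup.smul_def]
  congr! 3
  ext i; fin_cases i <;> simp [Matrix.smul_eq_mulVec, Matrix.mulVec, dotProduct, Fin.sum_univ_two]

lemma intVec_ne_zero {a c : ℤ} (h : IsCoprime a c) : ![(a : ℚ), c] ≠ 0 := by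
  intro h0
  have ha : a = 0 := by simpa using congrFun h0 0
  have hc : c = 0 := by simpa using congrFun h0 1
  exact not_isCoprime_zero_zero (ha ▸ hc ▸ h)

lemma isCoprime_col_zero (γ : SL2Z) : IsCoprime (γ 0 0) (γ 1 0) :=
  ⟨γ 1 1, -γ 0 1, by linear_combination det_fin_two_eq_one γ⟩

lemma mobius_inftyP (γ : SL2Z) :
    mobius γ inftyP = mk ℚ ![(γ 0 0 : ℚ), γ 1 0] (intVec_ne_zero (isCoprime_col_zero γ)) := by
  rw [inftyP, mobius_mk_eq_mk_iff]
  exact ⟨1, by ext i; fin_cases i <;> simp⟩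

lemma mobius_inftyP_eq_inftyP_iff (γ : SL2Z) : mobius γ inftyP = inftyP ↔ γ 1 0 = 0 := by
  rw [mobius_inftyP, inftyP, mk_eq_mk_iff']
  constructor
  · rintro ⟨t, ht⟩
    simpa using (congrFun ht 1).symm
  · intro h
    exact ⟨γ 0 0, by ext i; fin_cases i <;> simp [h]⟩

lemma mobius_Sel_inftyP : mobius Sel inftyP = zeroP := by
  rw [inftyP, zeroP, mobius_mk_eq_mk_iff]
  exact ⟨1, by ext i; fin_cases i <;> simp [coe_Sel]⟩

lemma mobius_Sel_zeroP : mobius Sel zeroP = inftyP := by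
  rw [inftyP, zeroP, mobius_mk_eq_mk_iff]
  exact ⟨-1, by ext i; fin_cases i <;> simp [coe_Sel]⟩

lemma mobius_Uel_inftyP : mobius Uel inftyP = zeroP := by
  rw [inftyP, zeroP, mobius_mk_eq_mk_iff]
  exact ⟨-1, by ext i; fin_cases i <;> simp [coe_Uel]⟩

lemma mobius_Uel_mul_Uel_zeroP : mobius (Uel * Uel) zeroP = inftyP := by
  rw [inftyP, zeroP, mobius_mk_eq_mk_iff]
  exact ⟨1, by ext i; fin_cases i <;> simp [SL2Z_mul_apply, coe_Uel]⟩

lemma mobius_zeroP (γ : SL2Z) : mobius γ zeroP = mobius (γ * Sel) inftyP := by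
  rw [mobius_mul, mobius_Sel_inftyP]

lemma exists_mobius_inftyP_eq (p : P1Q) : ∃ g : SL2Z, mobius g inftyP = p := by
  induction p using Projectivization.ind with | h v hv => ?_
  by_cases h1 : v 1 = 0
  · refine ⟨1, ?_⟩
    rw [mobius_one, inftyP, mk_eq_mk_iff']
    refine ⟨(v 0)⁻¹, ?_⟩
    have h0 : v 0 ≠ 0 := fun h0 => hv (by ext i; fin_cases i <;> simp [h0, h1])
    ext i; fin_cases i <;> simp [h0, h1]
  · set r := v 0 / v 1
    obtain ⟨u, w, huw⟩ := r.isCoprime_num_den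
    let g : SL2Z := ⟨!![r.num, -w; r.den, u], by rw [Matrix.det_fin_two_of]; linear_combination huw⟩
    refine ⟨g, ?_⟩
    rw [mobius_inftyP, mk_eq_mk_iff']
    refine ⟨r.den / v 1, ?_⟩
    ext i; fin_cases i
    · simp [g, r, ← Rat.mul_den_eq_num]; field_simp
    · simp [g, h1]

lemma exists_eq_mul_T_zpow {g γ : SL2Z} (h : mobius g inftyP = mobius γ inftyP) :
    ∃ η : ℤ, γ = g * T ^ η ∨ γ = -(g * T ^ η) := by
  have hk : (g⁻¹ * γ) 1 0 = 0 := by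
    rw [← mobius_inftyP_eq_inftyP_iff, mobius_mul, ← h, ← mobius_mul, inv_mul_cancel, mobius_one]
  have hd : (g⁻¹ * γ) 0 0 * (g⁻¹ * γ) 1 1 = 1 := by
    simpa [hk] using det_fin_two_eq_one (g⁻¹ * γ)
  rcases Int.eq_one_or_neg_one_of_mul_eq_one' hd with ⟨ha, hd⟩ | ⟨ha, hd⟩
  · refine ⟨(g⁻¹ * γ) 0 1, Or.inl ?_⟩
    rw [← inv_mul_eq_iff_eq_mul]
    ext i j; fin_cases i <;> fin_cases j <;> simp [ha, hd, hk, coe_T_zpow]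
  · refine ⟨-(g⁻¹ * γ) 0 1, Or.inr ?_⟩
    rw [← mul_neg, ← inv_mul_eq_iff_eq_mul]
    ext i j; fin_cases i <;> fin_cases j <;> simp [ha, hd, hk, coe_T_zpow]

def den (p : P1Q) : ℕ := ((exists_mobius_inftyP_eq p).choose 1 0).natAbs

lemma den_mobius_inftyP (γ : SL2Z) : den (mobius γ inftyP) = (γ 1 0).natAbs := by
  obtain ⟨η, h | h⟩ := exists_eq_mul_T_zpow (exists_mobius_inftyP_eq (mobius γ inftyP)).choose_spec
  all_goals
    rw [den]
    conv_rhs => rw [h]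
    simp [Matrix.mul_apply, Fin.sum_univ_two, coe_T_zpow]

lemma den_mobius_zeroP (γ : SL2Z) : den (mobius γ zeroP) = (γ 1 1).natAbs := by
  simp [mobius_zeroP, den_mobius_inftyP, SL2Z_mul_apply, coe_Sel]

lemma exists_descent (p : P1Q) :
    ∃ g : SL2Z, mobius g inftyP = p ∧ (p ≠ inftyP → (g 1 1).natAbs < (g 1 0).natAbs) := by
  obtain ⟨g, rfl⟩ := exists_mobius_inftyP_eq p
  refine ⟨g * T ^ (-(g 1 1 / g 1 0)), ?_, fun hp => ?_⟩
  · rw [mobius_mul, (mobius_inftyP_eq_inftyP_iff _).2 (by simp [coe_T_zpow])]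
  · have hc : g 1 0 ≠ 0 := fun hc => hp ((mobius_inftyP_eq_inftyP_iff g).2 hc)
    have h1 : (g * T ^ (-(g 1 1 / g 1 0))) 1 1 = g 1 1 % g 1 0 := by
      simp [SL2Z_mul_apply, coe_T_zpow, Int.emod_def]; ring
    have h2 : (g * T ^ (-(g 1 1 / g 1 0))) 1 0 = g 1 0 := by
      simp [Matrix.mul_apply, Fin.sum_univ_two, coe_T_zpow]
    rw [h1, h2]
    have := Int.emod_lt (g 1 1) hc
    have := Int.emod_nonneg (g 1 1) hc
    omega

/-- One step of the Euclidean algorithm on `p`. -/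
def descent (p : P1Q) : SL2Z := (exists_descent p).choose

lemma mobius_descent_inftyP (p : P1Q) : mobius (descent p) inftyP = p :=
  (exists_descent p).choose_spec.1

lemma natAbs_descent_lt {p : P1Q} (hp : p ≠ inftyP) :
    (descent p 1 1).natAbs < (descent p 1 0).natAbs :=
  (exists_descent p).choose_spec.2 hp

lemma den_mobius_descent_zeroP_lt {p : P1Q} (hp : p ≠ inftyP) :
    den (mobius (descent p) zeroP) < den p := by
  conv_rhs => rw [← mobius_descent_inftyP p]
  rw [den_mobius_zeroP, den_mobius_inftyP]
  exact natAbs_descent_lt hp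

open MonoidAlgebra

lemma Theta1_eq_linearCombination (x : MonoidAlgebra ℤ SL2Z) :
    Theta1 x = Finsupp.linearCombination ℤ
      (fun γ => Finsupp.single (mobius γ inftyP) 1 - Finsupp.single (mobius γ zeroP) 1) x.coeff :=
  rfl

lemma Theta1_zero : Theta1 0 = 0 := rfl

lemma Theta1_add (x y : MonoidAlgebra ℤ SL2Z) : Theta1 (x + y) = Theta1 x + Theta1 y := by
  simp only [Theta1_eq_linearCombination, coeff_add, map_add]

lemma Theta1_zsmul (n : ℤ) (x : MonoidAlgebra ℤ SL2Z) : Theta1 (n • x) = n • Theta1 x := by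
  simp only [Theta1_eq_linearCombination, coeff_smul, map_zsmul]

lemma Theta1_of (γ : SL2Z) :
    Theta1 (of ℤ SL2Z γ) =
      Finsupp.single (mobius γ inftyP) 1 - Finsupp.single (mobius γ zeroP) 1 := by
  simp [Theta1_eq_linearCombination, MonoidAlgebra.of_apply]

lemma single_eq_zsmul_of (γ : SL2Z) (n : ℤ) : single γ n = n • of ℤ SL2Z γ := by
  simp [MonoidAlgebra.of_apply]

lemma sum_Theta1_eq_zero (x : MonoidAlgebra ℤ SL2Z) : ((Theta1 x).sum fun _ c => c) = 0 := by
  induction x using MonoidAlgebra.induction_linear with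
  | zero => rfl
  | add x y hx hy =>
    rw [Theta1_add, Finsupp.sum_add_index' (fun _ => rfl) (fun _ _ _ => rfl), hx, hy, add_zero]
  | single γ n =>
    rw [single_eq_zsmul_of, Theta1_zsmul, Theta1_of, smul_sub, Finsupp.smul_single_one,
      Finsupp.smul_single_one, Finsupp.sum_sub_index (fun _ _ _ => rfl),
      Finsupp.sum_single_index rfl, Finsupp.sum_single_index rfl, sub_self]

lemma Theta1_of_mul_one_add_Sel (γ : SL2Z) :
    Theta1 (of ℤ SL2Z γ * (1 + of ℤ SL2Z Sel)) = 0 := by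
  rw [mul_add, mul_one, ← map_mul, Theta1_add, Theta1_of, Theta1_of, mobius_mul, mobius_mul,
    mobius_Sel_inftyP, mobius_Sel_zeroP]
  abel

lemma Theta1_of_mul_one_add_Uel_add_Uel_mul_Uel (γ : SL2Z) :
    Theta1 (of ℤ SL2Z γ * (1 + of ℤ SL2Z Uel + of ℤ SL2Z (Uel * Uel))) = 0 := by
  rw [mul_add, mul_add, mul_one, ← map_mul, ← map_mul, Theta1_add, Theta1_add, Theta1_of,
    Theta1_of, Theta1_of, mobius_mul γ Uel, mobius_mul γ Uel, mobius_mul γ (Uel * Uel),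
    mobius_mul γ (Uel * Uel), mobius_mul Uel Uel, mobius_Uel_inftyP, mobius_Uel_mul_Uel_zeroP]
  abel

lemma Theta1_mul_eq_zero {z : MonoidAlgebra ℤ SL2Z} (hz : ∀ γ, Theta1 (of ℤ SL2Z γ * z) = 0)
    (x : MonoidAlgebra ℤ SL2Z) : Theta1 (x * z) = 0 := by
  induction x using MonoidAlgebra.induction_linear with
  | zero => rw [zero_mul, Theta1_zero]
  | add x y hx hy => rw [add_mul, Theta1_add, hx, hy, add_zero]
  | single γ n => rw [single_eq_zsmul_of, smul_mul_assoc, Theta1_zsmul, hz, smul_zero]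

def relIdeal : Ideal (MonoidAlgebra ℤ SL2Z) :=
  Ideal.span {1 + of ℤ SL2Z Sel, 1 + of ℤ SL2Z Uel + of ℤ SL2Z (Uel * Uel)}

lemma mem_relIdeal_iff (x : MonoidAlgebra ℤ SL2Z) :
    x ∈ relIdeal ↔ ∃ p q : MonoidAlgebra ℤ SL2Z,
      x = p * (1 + of ℤ SL2Z Sel) + q * (1 + of ℤ SL2Z Uel + of ℤ SL2Z (Uel * Uel)) := by
  simp only [relIdeal, Ideal.span, Submodule.mem_span_pair, smul_eq_mul, eq_comm]

lemma Theta1_eq_zero_of_mem_relIdeal {x : MonoidAlgebra ℤ SL2Z} (hx : x ∈ relIdeal) :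
    Theta1 x = 0 := by
  obtain ⟨p, q, rfl⟩ := (mem_relIdeal_iff x).1 hx
  rw [Theta1_add, Theta1_mul_eq_zero Theta1_of_mul_one_add_Sel,
    Theta1_mul_eq_zero Theta1_of_mul_one_add_Uel_add_Uel_mul_Uel, add_zero]

open scoped Classical in
/-- The sum of the matrices met by the Euclidean algorithm (continued fraction expansion) of `p`. -/
def euclidPath (p : P1Q) : MonoidAlgebra ℤ SL2Z :=
  if _ : p = inftyP then 0
  else of ℤ SL2Z (descent p) + euclidPath (mobius (descent p) zeroP)
termination_by den p
decreasing_by exact den_mobius_descent_zeroP_lt ‹_›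

lemma euclidPath_inftyP : euclidPath inftyP = 0 := by
  rw [euclidPath, dif_pos rfl]

lemma euclidPath_of_ne {p : P1Q} (hp : p ≠ inftyP) :
    euclidPath p = of ℤ SL2Z (descent p) + euclidPath (mobius (descent p) zeroP) := by
  rw [euclidPath, dif_neg hp]

lemma Theta1_euclidPath (p : P1Q) :
    Theta1 (euclidPath p) = Finsupp.single p 1 - Finsupp.single inftyP 1 := by
  induction p using euclidPath.induct with
  | case1 => rw [euclidPath_inftyP, sub_self, Theta1_zero]
  | case2 p hp ih =>
    rw [euclidPath_of_ne hp, Theta1_add, ih, Theta1_of, mobius_descent_inftyP]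
    abel

def euclidLift : (P1Q →₀ ℤ) →ₗ[ℤ] MonoidAlgebra ℤ SL2Z :=
  Finsupp.linearCombination ℤ euclidPath

lemma Theta1_euclidLift (v : P1Q →₀ ℤ) :
    Theta1 (euclidLift v) = v - (v.sum fun _ c => c) • Finsupp.single inftyP 1 := by
  induction v using Finsupp.induction_linear with
  | zero => rw [map_zero, Theta1_zero, Finsupp.sum_zero_index, zero_smul, sub_zero]
  | add v w hv hw =>
    rw [map_add, Theta1_add, hv, hw, Finsupp.sum_add_index' (fun _ => rfl) (fun _ _ _ => rfl),
      add_smul]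
    abel
  | single p n =>
    rw [euclidLift, Finsupp.linearCombination_single, Theta1_zsmul, Theta1_euclidPath,
      Finsupp.sum_single_index rfl, smul_sub, Finsupp.smul_single_one]

def defect (γ : SL2Z) : MonoidAlgebra ℤ SL2Z :=
  of ℤ SL2Z γ - euclidPath (mobius γ inftyP) + euclidPath (mobius γ zeroP)

lemma defect_descent {p : P1Q} (hp : p ≠ inftyP) : defect (descent p) = 0 := by
  rw [defect, mobius_descent_inftyP, euclidPath_of_ne hp]
  abel

lemma defect_add_defect_mul_Sel (γ : SL2Z) :
    defect γ + defect (γ * Sel) = of ℤ SL2Z γ * (1 + of ℤ SL2Z Sel) := by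
  rw [defect, defect, mobius_mul, mobius_mul, mobius_Sel_inftyP, mobius_Sel_zeroP, mul_add,
    mul_one, ← map_mul]
  abel

lemma defect_add_defect_mul_Uel_add_defect_mul_Uel_mul_Uel (γ : SL2Z) :
    defect γ + defect (γ * Uel) + defect (γ * Uel * Uel) =
      of ℤ SL2Z γ * (1 + of ℤ SL2Z Uel + of ℤ SL2Z (Uel * Uel)) := by
  rw [defect, defect, defect, mul_assoc, mobius_mul γ Uel, mobius_mul γ Uel,
    mobius_mul γ (Uel * Uel), mobius_mul γ (Uel * Uel), mobius_mul Uel Uel, mobius_Uel_inftyP,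
    mobius_Uel_mul_Uel_zeroP, mul_add, mul_add, mul_one, ← map_mul, ← map_mul]
  abel

lemma defect_mul_Sel_mem_iff (γ : SL2Z) : defect (γ * Sel) ∈ relIdeal ↔ defect γ ∈ relIdeal := by
  have h : defect γ + defect (γ * Sel) ∈ relIdeal := by
    rw [defect_add_defect_mul_Sel]
    exact Ideal.mul_mem_left _ _ (Ideal.subset_span (by simp))
  exact ⟨fun hS => by simpa using sub_mem h hS, fun h1 => by simpa using sub_mem h h1⟩

lemma defect_neg_mem_iff (γ : SL2Z) : defect (-γ) ∈ relIdeal ↔ defect γ ∈ relIdeal := by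
  have h : -γ = γ * Sel * Sel := by
    ext i j; fin_cases i <;> fin_cases j <;> simp [SL2Z_mul_apply, coe_Sel]
  rw [h, defect_mul_Sel_mem_iff, defect_mul_Sel_mem_iff]

/-- The relation `1 + U + U²` at `γ S`, with `S U = T⁻¹`: the columns of `γ`, `γ T⁻¹` and
`γ S U²` are the three sides of a Farey triangle. -/
lemma defect_mul_Sel_mul_Uel_mem_iff {γ : SL2Z} (h : defect (γ * Sel * Uel * Uel) ∈ relIdeal) :
    defect (γ * Sel * Uel) ∈ relIdeal ↔ defect γ ∈ relIdeal := by
  have htri : defect (γ * Sel) + defect (γ * Sel * Uel) + defect (γ * Sel * Uel * Uel)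
      ∈ relIdeal := by
    rw [defect_add_defect_mul_Uel_add_defect_mul_Uel_mul_Uel]
    exact Ideal.mul_mem_left _ _ (Ideal.subset_span (by simp))
  rw [← defect_mul_Sel_mem_iff γ]
  constructor <;> intro h1 <;> convert sub_mem (sub_mem htri h1) h using 1 <;> abel

def bottomRowNorm (γ : SL2Z) : ℕ := (γ 1 0).natAbs + (γ 1 1).natAbs

lemma bottomRowNorm_neg (γ : SL2Z) : bottomRowNorm (-γ) = bottomRowNorm γ := by
  simp [bottomRowNorm]

lemma bottomRowNorm_mul_Sel (γ : SL2Z) : bottomRowNorm (γ * Sel) = bottomRowNorm γ := by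
  simp [bottomRowNorm, SL2Z_mul_apply, coe_Sel, add_comm]

lemma bottomRowNorm_mul_Sel_mul_Uel (γ : SL2Z) :
    bottomRowNorm (γ * Sel * Uel) = (γ 1 0).natAbs + (γ 1 1 - γ 1 0).natAbs := by
  simp [bottomRowNorm, SL2Z_mul_apply, coe_Sel, coe_Uel, sub_eq_add_neg]

lemma bottomRowNorm_mul_Sel_mul_Uel_mul_Uel (γ : SL2Z) :
    bottomRowNorm (γ * Sel * Uel * Uel) = (γ 1 0 - γ 1 1).natAbs + (γ 1 1).natAbs := by
  simp [bottomRowNorm, SL2Z_mul_apply, coe_Sel, coe_Uel, sub_eq_add_neg]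

lemma defect_mul_T_zpow_mem {g : SL2Z} (hg : (g 1 1).natAbs < (g 1 0).natAbs)
    (hdg : defect g ∈ relIdeal) {η : ℤ}
    (hη : ((g * T ^ η) 1 1).natAbs ≤ ((g * T ^ η) 1 0).natAbs)
    (ih : ∀ δ, bottomRowNorm δ < bottomRowNorm (g * T ^ η) → defect δ ∈ relIdeal) :
    defect (g * T ^ η) ∈ relIdeal := by
  have h10 : (g * T ^ η) 1 0 = g 1 0 := by simp [SL2Z_mul_apply, coe_T_zpow]
  have h11 : (g * T ^ η) 1 1 = g 1 0 * η + g 1 1 := by simp [SL2Z_mul_apply, coe_T_zpow]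
  have hη2 : η.natAbs < 2 := by
    rw [h10, h11] at hη
    have : (g 1 0).natAbs * η.natAbs < (g 1 0).natAbs * 2 := by
      rw [← Int.natAbs_mul]; omega
    exact Nat.lt_of_mul_lt_mul_left this
  obtain rfl | rfl | rfl : η = -1 ∨ η = 0 ∨ η = 1 := by omega
  · rw [_root_.zpow_neg_one, ← Sel_mul_Uel, ← mul_assoc] at ih ⊢
    refine (defect_mul_Sel_mul_Uel_mem_iff (ih _ ?_)).2 hdg
    rw [bottomRowNorm_mul_Sel_mul_Uel_mul_Uel, bottomRowNorm_mul_Sel_mul_Uel]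
    omega
  · simpa using hdg
  · rw [zpow_one] at ih h10 h11 ⊢
    refine (defect_mul_Sel_mul_Uel_mem_iff (ih _ ?_)).1 ?_
    · rw [bottomRowNorm_mul_Sel_mul_Uel_mul_Uel, bottomRowNorm, h10, h11]
      omega
    · rwa [mul_assoc, mul_assoc, Sel_mul_Uel, mul_inv_cancel, mul_one]

lemma defect_mem_of_natAbs_le {γ : SL2Z} (hle : (γ 1 1).natAbs ≤ (γ 1 0).natAbs)
    (ih : ∀ δ, bottomRowNorm δ < bottomRowNorm γ → defect δ ∈ relIdeal) :
    defect γ ∈ relIdeal := by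
  have hp : mobius γ inftyP ≠ inftyP := by
    rw [Ne, mobius_inftyP_eq_inftyP_iff]
    intro hc
    have hd := det_fin_two_eq_one γ
    rw [hc, Int.natAbs_eq_zero.1 (by omega : (γ 1 1).natAbs = 0)] at hd
    simp at hd
  have hdg : defect (descent (mobius γ inftyP)) ∈ relIdeal := by
    rw [defect_descent hp]
    exact zero_mem _
  obtain ⟨η, hγ⟩ := exists_eq_mul_T_zpow (mobius_descent_inftyP (mobius γ inftyP))
  have hA := defect_mul_T_zpow_mem (natAbs_descent_lt hp) hdg (η := η)
  rcases hγ with hγ | hγ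
  · rw [hγ] at hle ih ⊢
    exact hA hle ih
  · rw [hγ, bottomRowNorm_neg] at ih
    rw [hγ, SpecialLinearGroup.coe_neg, Matrix.neg_apply, Matrix.neg_apply, Int.natAbs_neg,
      Int.natAbs_neg] at hle
    rw [hγ, defect_neg_mem_iff]
    exact hA hle ih

theorem defect_mem (γ : SL2Z) : defect γ ∈ relIdeal := by
  induction hn : bottomRowNorm γ using Nat.strong_induction_on generalizing γ with
  | _ n ih =>
  subst hn
  have ih' : ∀ δ, bottomRowNorm δ < bottomRowNorm γ → defect δ ∈ relIdeal :=
    fun δ hδ => ih _ hδ δ rfl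
  rcases le_total (γ 1 1).natAbs (γ 1 0).natAbs with h | h
  · exact defect_mem_of_natAbs_le h ih'
  · rw [← defect_mul_Sel_mem_iff]
    refine defect_mem_of_natAbs_le ?_ (by rwa [bottomRowNorm_mul_Sel])
    simpa [SL2Z_mul_apply, coe_Sel] using h

lemma sub_euclidLift_Theta1_mem (x : MonoidAlgebra ℤ SL2Z) :
    x - euclidLift (Theta1 x) ∈ relIdeal := by
  induction x using MonoidAlgebra.induction_linear with
  | zero => rw [Theta1_zero, map_zero, sub_zero]; exact zero_mem _
  | add x y hx hy =>
    rw [Theta1_add, map_add, add_sub_add_comm]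
    exact add_mem hx hy
  | single γ n =>
    rw [single_eq_zsmul_of, Theta1_zsmul, map_zsmul, ← smul_sub, Theta1_of, map_sub,
      euclidLift, Finsupp.linearCombination_single, Finsupp.linearCombination_single, one_smul,
      one_smul, ← sub_add]
    exact Submodule.smul_of_tower_mem _ n (defect_mem γ)

theorem statement14 :
    (Set.range Theta1 = {v : P1Q →₀ ℤ | (Finsupp.sum v fun _ c => c) = 0}) ∧
    (∀ x : MonoidAlgebra ℤ SL2Z, Theta1 x = 0 ↔
      ∃ p q : MonoidAlgebra ℤ SL2Z,
        x = p * (1 + MonoidAlgebra.of ℤ SL2Z Sel) +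
            q * (1 + MonoidAlgebra.of ℤ SL2Z Uel + MonoidAlgebra.of ℤ SL2Z (Uel * Uel))) := by
  refine ⟨Set.ext fun v => ⟨?_, fun hv => ⟨euclidLift v, ?_⟩⟩,
    fun x => ⟨fun hx => ?_, fun hx => ?_⟩⟩
  · rintro ⟨x, rfl⟩
    exact sum_Theta1_eq_zero x
  · rw [Theta1_euclidLift, show (v.sum fun _ c => c) = 0 from hv, zero_smul, sub_zero]
  · rw [← mem_relIdeal_iff]
    simpa [hx] using sub_euclidLift_Theta1_mem x
  · exact Theta1_eq_zero_of_mem_relIdeal ((mem_relIdeal_iff x).2 hx)
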